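/- arXiv:1503.02477 — 5 statements merged into one kernel-verified Lean document; each statement's English description precedes it below -/
import Mathlib

section
/- Let R be a noetherian ring, p a prime, and M a finitely generated discrete R-module that is p-power torsion (i.e., annihilated by some power of p). Suppose a finite p-group G acts on M by R-linear automorphisms. Then the support of the fixed-point submodule M^G equals the support of M. -/
/-!
Since `M^G ⊆ M`, only `Supp M ⊆ Supp M^G` needs proof, i.e. that every `a ∈ Ann(M^G)` is
nilpotent on `M`. As `M` is noetherian, for large `k` the kernel and the image of `a^k` meet
trivially. The image `a^k M` is `G`-stable and `p`-power torsion, so if it were nonzero the orbit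
of a nonzero element would generate a finite `p`-group with a `G`-action, which has a nonzero fixed
point `x`. Then `a x = 0` puts `x` in the kernel of `a^k` as well, a contradiction.
-/

open MulAction

theorem Nat.Prime.dvd_of_dvd_pow_of_ne_one {p n d : ℕ} (hp : p.Prime) (hd : d ∣ p ^ n)
    (hd1 : d ≠ 1) : p ∣ d := by
  obtain ⟨i, -, rfl⟩ := (Nat.dvd_prime_pow hp).mp hd
  exact dvd_pow_self p (by rintro rfl; exact hd1 (pow_zero p))

section FixedPoints

variable {G A : Type*} [Group G] [AddCommGroup A] [DistribMulAction G A]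

theorem AddSubgroup.smul_mem_closure_orbit (g : G) {y x : A}
    (hx : x ∈ AddSubgroup.closure (orbit G y)) : g • x ∈ AddSubgroup.closure (orbit G y) := by
  have : AddSubgroup.closure (orbit G y) ≤
      (AddSubgroup.closure (orbit G y)).comap (DistribSMul.toAddMonoidHom A g) :=
    AddSubgroup.closure_le _ |>.mpr fun z hz ↦
      AddSubgroup.subset_closure (mapsTo_smul_orbit g y hz)
  exact this hx

theorem IsPGroup.exists_ne_zero_mem_fixedPoints_closure_orbit {p : ℕ} [hp : Fact p.Prime]
    [Finite G] (hG : IsPGroup p G) {n : ℕ} (htors : ∀ x : A, p ^ n • x = 0) {y : A}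
    (hy : y ≠ 0) : ∃ x ∈ AddSubgroup.closure (orbit G y), x ≠ 0 ∧ x ∈ fixedPoints G A := by
  set C := AddSubgroup.closure (orbit G y)
  have : Finite (orbit G y) := Set.finite_range _ |>.to_subtype
  have : Finite C := AddCommGroup.finite_of_fg_isAddTorsion _ fun x ↦
    isOfFinAddOrder_iff_nsmul_eq_zero.mpr ⟨p ^ n, pow_pos hp.out.pos n, Subtype.ext (htors x)⟩
  have hpC : p ∣ Nat.card C := by
    let y' : C := ⟨y, AddSubgroup.subset_closure (mem_orbit_self y)⟩
    refine (hp.out.dvd_of_dvd_pow_of_ne_one (n := n) ?_ ?_).trans (addOrderOf_dvd_natCard y')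
    · exact addOrderOf_dvd_of_nsmul_eq_zero (Subtype.ext (htors y))
    · exact fun h ↦ hy (congrArg Subtype.val (AddMonoid.addOrderOf_eq_one_iff.mp h))
  let B : SubMulAction G A := ⟨C, fun g _ ↦ AddSubgroup.smul_mem_closure_orbit g⟩
  obtain ⟨x, hx, hx0⟩ := hG.exists_fixed_point_of_prime_dvd_card_of_fixed_point B hpC
    (a := ⟨0, C.zero_mem⟩) fun g ↦ Subtype.ext (smul_zero g)
  exact ⟨x, x.2, fun h ↦ hx0 (Subtype.ext h.symm), fun g ↦ congrArg Subtype.val (hx g)⟩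

end FixedPoints

section Support

variable (R G M : Type*) [CommRing R] [AddCommGroup M] [Module R M]

def FixedPoints.submodule [Monoid G] [DistribMulAction G M] [SMulCommClass G R M] :
    Submodule R M where
  __ := FixedPoints.addSubmonoid G M
  smul_mem' r x hx g := by rw [smul_comm, hx]

@[simp]
lemma FixedPoints.mem_submodule [Monoid G] [DistribMulAction G M] [SMulCommClass G R M]
    (x : M) : x ∈ submodule R G M ↔ ∀ g : G, g • x = x :=
  Iff.rfl

variable {R G M} [Group G] [DistribMulAction G M] [SMulCommClass G R M] {p : ℕ} [Fact p.Prime]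
  [Finite G] [IsNoetherian R M]

theorem IsPGroup.annihilator_fixedPoints_le_radical_annihilator (hG : IsPGroup p G) {n : ℕ}
    (htors : ∀ x : M, p ^ n • x = 0) :
    Module.annihilator R (FixedPoints.submodule R G M) ≤ (Module.annihilator R M).radical := by
  intro a ha
  set f := algebraMap R (Module.End R M) a
  have hfk (k : ℕ) (x : M) : (f ^ k) x = a ^ k • x := by
    rw [← map_pow, Module.algebraMap_end_apply]
  obtain ⟨k, hdisj, hk⟩ := (f.eventually_disjoint_ker_pow_range_pow.and
    (Filter.eventually_gt_atTop 0)).exists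
  refine ⟨k, Module.mem_annihilator.mpr fun m ↦ ?_⟩
  by_contra hm
  obtain ⟨x, hxC, hx0, hxfix⟩ := hG.exists_ne_zero_mem_fixedPoints_closure_orbit htors hm
  have hx_range : x ∈ LinearMap.range (f ^ k) := by
    refine (AddSubgroup.closure_le (LinearMap.range (f ^ k)).toAddSubgroup).mpr ?_ hxC
    rintro _ ⟨g, rfl⟩
    exact ⟨g • m, (hfk k _).trans (smul_comm g (a ^ k) m).symm⟩
  have hx_ker : x ∈ LinearMap.ker (f ^ k) := by
    have hax : a • x = 0 := congrArg Subtype.val (Module.mem_annihilator.mp ha ⟨x, hxfix⟩)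
    rw [LinearMap.mem_ker, hfk, ← Nat.succ_pred_eq_of_pos hk, pow_succ, mul_smul, hax, smul_zero]
  exact hx0 (Submodule.disjoint_def.mp hdisj x hx_ker hx_range)

theorem IsPGroup.support_fixedPoints_eq_support (hG : IsPGroup p G) {n : ℕ}
    (htors : ∀ x : M, p ^ n • x = 0) :
    Module.support R (FixedPoints.submodule R G M) = Module.support R M := by
  refine (Module.support_subset_of_injective _ (Submodule.injective_subtype _)).antisymm ?_
  rw [Module.support_eq_zeroLocus, Module.support_eq_zeroLocus,
    PrimeSpectrum.zeroLocus_subset_zeroLocus_iff]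
  exact hG.annihilator_fixedPoints_le_radical_annihilator htors

end Support

/-- For a noetherian ring `R`, a finitely generated `p`-power torsion `R`-module
`M` with an `R`-linear action of a finite `p`-group `G`, the support of the fixed-point
submodule `M^G` equals the support of `M`. -/
theorem support_fixedPoints_eq_support
    (R : Type) [CommRing R] [IsNoetherianRing R]
    (p : ℕ) (hp : p.Prime)
    (M : Type) [AddCommGroup M] [Module R M] [Module.Finite R M]
    (htors : ∃ n : ℕ, ∀ m : M, (p ^ n : ℕ) • m = 0)
    (G : Type) [Group G] [Finite G] (hG : ∃ k : ℕ, Nat.card G = p ^ k)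
    (ρ : G →* (M ≃ₗ[R] M)) :
    Module.support R
      (↥(⨅ g : G, LinearMap.ker ((ρ g).toLinearMap - LinearMap.id))) =
    Module.support R M := by
  have : Fact p.Prime := ⟨hp⟩
  obtain ⟨n, htors⟩ := htors
  obtain ⟨k, hk⟩ := hG
  let _ : DistribMulAction G M := DistribMulAction.compHom M ρ
  have : SMulCommClass G R M := ⟨fun g r m ↦ (ρ g).map_smul r m⟩
  have hfix : ⨅ g : G, LinearMap.ker ((ρ g).toLinearMap - LinearMap.id) =
      FixedPoints.submodule R G M := by
    ext x
    simp only [Submodule.mem_iInf, LinearMap.mem_ker, LinearMap.sub_apply, sub_eq_zero,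
      FixedPoints.mem_submodule]
    rfl
  rw [hfix]
  exact (IsPGroup.of_card hk).support_fixedPoints_eq_support htors
end

section
/- Let R be a noetherian ring, p a prime, M a finitely generated p-power torsion R-module with an R-linear action of a finite p-group G, and let 𝔭 be a minimal prime of the support of M. Then the length of (M/M^G)_𝔭 over R_𝔭 is strictly less than the length of M_𝔭 over R_𝔭. -/
/-- The length of a module, expressed as the Krull dimension of its lattice of submodules. -/
noncomputable def moduleLength (R M : Type) [Ring R] [AddCommGroup M] [Module R M] :
    WithBot ℕ∞ :=
  Order.krullDim (Submodule R M)

/-!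
Localization is exact and commutes with the finite intersection of kernels defining `M^G`, so
`(M/M^G)_𝔭 ≅ M_𝔭 / (M_𝔭)^G`. As `𝔭` is minimal in the support, the maximal ideal of `R_𝔭` is the
only prime containing the annihilator of `M_𝔭`, so `M_𝔭` has finite length and it suffices that
`(M_𝔭)^G ≠ 0`. This holds for any finite `p`-group acting on a nonzero `p`-primary abelian group:
the subgroup generated by the orbit of a nonzero element is finite of `p`-power order, and since
the number of fixed points of a `p`-group on a finite set is congruent to its size mod `p`, there
is a fixed point besides `0`.
-/

theorem prime_dvd_natCard_of_forall_exists_pow_nsmul_eq_zero {p : ℕ} [Fact p.Prime]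
    {A : Type*} [AddCommGroup A] [Finite A] [Nontrivial A] (hA : ∀ a : A, ∃ k, p ^ k • a = 0) :
    p ∣ Nat.card A := by
  have hpA : IsPGroup p (Multiplicative A) := fun a => hA a.toAdd
  obtain ⟨n, hn, hcard⟩ := hpA.nontrivial_iff_card.mp inferInstance
  exact hcard ▸ dvd_pow_self p hn.ne'

theorem AddSubgroup.finite_closure_of_isOfFinAddOrder {X : Type*} [AddCommGroup X] {s : Set X}
    (hs : s.Finite) (htors : ∀ x ∈ s, IsOfFinAddOrder x) : Finite (closure s) := by
  have := hs.to_subtype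
  refine AddCommGroup.finite_of_fg_isAddTorsion _ fun y => ?_
  have hle : closure s ≤ AddCommGroup.torsion X := (closure_le _).mpr htors
  rw [← addOrderOf_pos_iff, ← AddSubgroup.addOrderOf_coe]
  exact addOrderOf_pos_iff.mpr (hle y.2)

namespace Representation

variable {R G M : Type*} [CommRing R] [AddCommGroup M] [Module R M]

theorem invariants_ne_bot_of_isPGroup {p : ℕ} [Fact p.Prime] [Group G] [Finite G]
    [Nontrivial M] (ρ : Representation R G M) (hG : IsPGroup p G)
    (hM : ∀ v : M, ∃ n, p ^ n • v = 0) : ρ.invariants ≠ ⊥ := by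
  obtain ⟨x, hx⟩ := exists_ne (0 : M)
  set A := AddSubgroup.closure (Set.range fun g => ρ g x)
  have : Finite A := by
    refine AddSubgroup.finite_closure_of_isOfFinAddOrder (Set.finite_range _) ?_
    rintro _ ⟨g, rfl⟩
    obtain ⟨n, hn⟩ := hM (ρ g x)
    exact isOfFinAddOrder_iff_nsmul_eq_zero.mpr ⟨p ^ n, pow_pos (Fact.out : p.Prime).pos n, hn⟩
  have hstable (g : G) (y : M) (hy : y ∈ A) : ρ g y ∈ A := by
    induction hy using AddSubgroup.closure_induction with
    | mem y hy =>
      obtain ⟨h, rfl⟩ := hy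
      exact AddSubgroup.subset_closure ⟨g * h, by simp⟩
    | zero => simp
    | add y z _ _ hy hz => simpa using add_mem hy hz
    | neg y _ hy => simpa using neg_mem hy
  let _ : MulAction G A :=
    { smul g y := ⟨ρ g y, hstable g y y.2⟩
      one_smul y := Subtype.ext <| show ρ 1 y = y by simp
      mul_smul g h y := Subtype.ext <| show ρ (g * h) y = ρ g (ρ h y) by simp }
  have : Nontrivial A := ⟨⟨x, AddSubgroup.subset_closure ⟨1, by simp⟩⟩, 0, by simpa using hx⟩
  have hpA : p ∣ Nat.card A := prime_dvd_natCard_of_forall_exists_pow_nsmul_eq_zero fun y => by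
    obtain ⟨n, hn⟩ := hM y
    exact ⟨n, Subtype.ext hn⟩
  obtain ⟨y, hy, hy0⟩ := hG.exists_fixed_point_of_prime_dvd_card_of_fixed_point A hpA
    (a := 0) fun g => Subtype.ext (map_zero (ρ g))
  rw [Submodule.ne_bot_iff]
  exact ⟨y, fun g => congrArg Subtype.val (hy g), fun h => hy0 (Subtype.ext h.symm)⟩

noncomputable def localized [Monoid G] (ρ : Representation R G M) (S : Submonoid R) :
    Representation (Localization S) G (LocalizedModule S M) where
  toFun g := LocalizedModule.map S (ρ g)
  map_one' := by
    ext x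
    induction x using LocalizedModule.induction_on
    simp
  map_mul' g h := by
    ext x
    induction x using LocalizedModule.induction_on
    simp

@[simp]
theorem localized_apply_mk [Monoid G] (ρ : Representation R G M) (S : Submonoid R) (g : G)
    (m : M) (s : S) : ρ.localized S g (.mk m s) = .mk (ρ g m) s :=
  LocalizedModule.map_mk S (ρ g) m s

theorem invariants_eq_iInf_ker [Group G] (ρ : Representation R G M) :
    ρ.invariants = ⨅ g, LinearMap.ker (ρ g - LinearMap.id) := by
  ext
  simp [sub_eq_zero]

theorem invariants_localized [Group G] [Finite G] (ρ : Representation R G M)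
    (S : Submonoid R) : (ρ.localized S).invariants = ρ.invariants.localized S := by
  have := Fintype.ofFinite G
  refine le_antisymm (fun x hx => ?_) ((Submodule.localized'gi _ S _).gc.l_le fun m hm g => ?_)
  · induction x using LocalizedModule.induction_on with | _ m s
    have (g : G) : ∃ u : S, u • s • ρ g m = u • s • m :=
      LocalizedModule.mk_eq.mp (by simpa using hx g)
    choose u hu using this
    -- a common denominator `s * ∏ g, u g` clears all the relations `ρ g (m / s) = m / s` at once
    refine ⟨(s * ∏ g, u g) • m, fun g => ?_, (s * ∏ g, u g) * s, ?_⟩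
    · obtain ⟨c, hc⟩ := Finset.dvd_prod_of_mem u (Finset.mem_univ g)
      rw [LinearMap.map_smul_of_tower, hc, show s * (u g * c) = c * (u g * s) by ac_rfl,
        mul_smul, mul_smul, mul_smul, mul_smul, hu]
    · rw [← IsLocalizedModule.mk_eq_mk', LocalizedModule.mk_cancel_common_left]
  · simp [hm g]

end Representation

open IsLocalRing in
theorem IsLocalRing.isArtinian_of_maximalIdeal_mem_minimalPrimes {A M : Type*} [CommRing A]
    [IsNoetherianRing A] [IsLocalRing A] [AddCommGroup M] [Module A M] [Module.Finite A M]
    (h : maximalIdeal A ∈ (Module.annihilator A M).minimalPrimes) : IsArtinian A M := by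
  have := IsLocalRing.quotient_artinian_of_mem_minimalPrimes_of_isLocalRing _ h
  let _ : Module (A ⧸ Module.annihilator A M) M := Module.quotientAnnihilator
  have : Module.Finite (A ⧸ Module.annihilator A M) M :=
    Module.Finite.of_restrictScalars_finite A _ M
  exact isArtinian_of_surjective_algebraMap <|
    Ideal.Quotient.mk_surjective (I := Module.annihilator A M)

open IsLocalRing in
theorem maximalIdeal_mem_minimalPrimes_annihilator_localizedModule {R M : Type*} [CommRing R]
    [AddCommGroup M] [Module R M] [Module.Finite R M] {𝔭 : PrimeSpectrum R}
    (h : Minimal (· ∈ Module.support R M) 𝔭) :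
    maximalIdeal (Localization.AtPrime 𝔭.asIdeal) ∈
      (Module.annihilator (Localization.AtPrime 𝔭.asIdeal)
        (LocalizedModule.AtPrime 𝔭.asIdeal M)).minimalPrimes := by
  have : Nontrivial (LocalizedModule.AtPrime 𝔭.asIdeal M) := Module.mem_support_iff.mp h.prop
  have hann : Module.annihilator R M ≤ (Module.annihilator (Localization.AtPrime 𝔭.asIdeal)
      (LocalizedModule.AtPrime 𝔭.asIdeal M)).under R := by
    rw [Ideal.under, Module.comap_annihilator]
    intro a ha
    rw [Module.mem_annihilator] at ha ⊢
    intro x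
    induction x using LocalizedModule.induction_on with | _ m s
    rw [LocalizedModule.smul'_mk, ha, LocalizedModule.zero_mk]
  refine ⟨⟨inferInstance, le_maximalIdeal ?_⟩, fun Q ⟨_, hQ⟩ hle => ?_⟩
  · exact Module.annihilator_eq_top_iff.not.mpr (not_subsingleton _)
  have hQ𝔭 : (⟨Q.under R, inferInstance⟩ : PrimeSpectrum R) = 𝔭 := by
    refine h.eq_of_le (Module.mem_support_iff_of_finite.mpr (hann.trans (Ideal.comap_mono hQ))) ?_
    exact (Ideal.comap_mono hle).trans Localization.AtPrime.under_maximalIdeal.le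
  exact (Localization.AtPrime.eq_maximalIdeal_iff_under_eq.mp
    (congrArg PrimeSpectrum.asIdeal hQ𝔭)).ge

/-- For a noetherian ring `R`, a finitely generated `p`-power torsion `R`-module
`M` with an `R`-linear action of a finite `p`-group `G`, and `𝔭` a minimal prime of the
support of `M`, the length of `(M/M^G)_𝔭` over `R_𝔭` is strictly smaller than the length
of `M_𝔭` over `R_𝔭`. -/
theorem length_localization_quotient_fixedPoints_lt
    (R : Type) [CommRing R] [IsNoetherianRing R]
    (p : ℕ) (hp : p.Prime)
    (M : Type) [AddCommGroup M] [Module R M] [Module.Finite R M]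
    (htors : ∃ n : ℕ, ∀ m : M, (p ^ n : ℕ) • m = 0)
    (G : Type) [Group G] [Finite G] (hG : ∃ k : ℕ, Nat.card G = p ^ k)
    (ρ : G →* (M ≃ₗ[R] M))
    (𝔭 : PrimeSpectrum R) (h𝔭 : 𝔭 ∈ Module.support R M)
    (hmin : ∀ 𝔮 ∈ Module.support R M, 𝔮 ≤ 𝔭 → 𝔮 = 𝔭) :
    moduleLength (Localization 𝔭.asIdeal.primeCompl)
        (LocalizedModule 𝔭.asIdeal.primeCompl
          (M ⧸ (⨅ g : G, LinearMap.ker ((ρ g).toLinearMap - LinearMap.id)))) <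
    moduleLength (Localization 𝔭.asIdeal.primeCompl)
        (LocalizedModule 𝔭.asIdeal.primeCompl M) := by
  obtain ⟨n, hn⟩ := htors
  obtain ⟨k, hk⟩ := hG
  have : Fact p.Prime := ⟨hp⟩
  let σ : Representation R G M := LinearEquiv.automorphismGroup.toLinearMapMonoidHom.comp ρ
  have hN : ⨅ g : G, LinearMap.ker ((ρ g).toLinearMap - LinearMap.id) = σ.invariants :=
    σ.invariants_eq_iInf_ker.symm
  have : Nontrivial (LocalizedModule 𝔭.asIdeal.primeCompl M) := Module.mem_support_iff.mp h𝔭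
  have : IsArtinian (Localization 𝔭.asIdeal.primeCompl) (LocalizedModule 𝔭.asIdeal.primeCompl M) :=
    IsLocalRing.isArtinian_of_maximalIdeal_mem_minimalPrimes <|
      maximalIdeal_mem_minimalPrimes_annihilator_localizedModule
        ⟨h𝔭, fun 𝔮 h𝔮 hle => (hmin 𝔮 h𝔮 hle).ge⟩
  have hinv : σ.invariants.localized 𝔭.asIdeal.primeCompl ≠ ⊥ := by
    rw [← σ.invariants_localized]
    refine (σ.localized _).invariants_ne_bot_of_isPGroup (IsPGroup.of_card hk)
      fun x => ⟨n, ?_⟩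
    induction x using LocalizedModule.induction_on with | _ m s
    rw [← Nat.cast_smul_eq_nsmul R, LocalizedModule.smul'_mk, Nat.cast_smul_eq_nsmul, hn,
      LocalizedModule.zero_mk]
  rw [moduleLength, moduleLength, ← Module.coe_length, ← Module.coe_length, hN,
    ← (localizedQuotientEquiv _ σ.invariants).length_eq]
  exact_mod_cast Submodule.length_quotient_lt _ hinv
end

section
/- Let G = (Z/2)^3 and let H^*(BG; F_2) = F_2[x,y,z] be its mod-2 cohomology ring with x, y, z of degree 1. The element f = x^4 + (x+y+z)xyz ∈ H^4 satisfies Sq^1(f) = 0, but Sq^3(f) is not divisible by f in F_2[x,y,z]. -/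
/-!
Since `totalSq` is the ring map `v ↦ v + v²` and `2 = 0`, expanding `totalSq f` gives
`f + Sq²f + Sq³f + f²` with no term of degree 5, and `Sq³f = xyz · ∑_{i ≠ j} xᵢ³xⱼ`.
In `𝔽₈ = 𝔽₂[w]/(w³ + w² + 1)`, `f` vanishes at `(1, w, w²)` while `Sq³f` takes the value `1`
there, so `f` cannot divide `Sq³f`.
-/

open MvPolynomial

noncomputable section

/-- The total Steenrod square on `H^*(B(Z/2)^3; F₂) = F₂[x,y,z]`: the `F₂`-algebra endomorphism
determined by `v ↦ v + v²` on degree-one generators.  For `f` homogeneous of degree `n`,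
`Sqᵏ f` is the homogeneous component of degree `n + k` of `totalSq f`. -/
def totalSq : MvPolynomial (Fin 3) (ZMod 2) →ₐ[ZMod 2] MvPolynomial (Fin 3) (ZMod 2) :=
  aeval (fun i => X i + X i ^ 2)

def fCarlsson : MvPolynomial (Fin 3) (ZMod 2) :=
  X 0 ^ 4 + (X 0 + X 1 + X 2) * (X 0 * X 1 * X 2)

theorem MvPolynomial.not_dvd_of_aeval_eq_zero {σ R S : Type*} [CommSemiring R] [CommSemiring S]
    [Algebra R S] {f g : MvPolynomial σ R} (v : σ → S) (hf : aeval v f = 0)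
    (hg : aeval v g ≠ 0) : ¬ f ∣ g :=
  fun h => hg (zero_dvd_iff.1 (hf ▸ map_dvd (aeval v) h))

def sq2Carlsson : MvPolynomial (Fin 3) (ZMod 2) :=
  X 0 * X 1 * X 2 * (X 0 ^ 3 + X 1 ^ 3 + X 2 ^ 3 + X 0 * X 1 * X 2)

def sq3Carlsson : MvPolynomial (Fin 3) (ZMod 2) :=
  X 0 ^ 4 * X 1 ^ 2 * X 2 + X 0 ^ 4 * X 1 * X 2 ^ 2 + X 0 ^ 2 * X 1 ^ 4 * X 2 +
    X 0 * X 1 ^ 4 * X 2 ^ 2 + X 0 ^ 2 * X 1 * X 2 ^ 4 + X 0 * X 1 ^ 2 * X 2 ^ 4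

theorem totalSq_fCarlsson :
    totalSq fCarlsson = fCarlsson + sq2Carlsson + sq3Carlsson + fCarlsson ^ 2 := by
  simp only [totalSq, fCarlsson, sq2Carlsson, sq3Carlsson, map_add, map_mul, map_pow, aeval_X]
  grind

theorem isHomogeneous_fCarlsson : fCarlsson.IsHomogeneous 4 := by
  have x := isHomogeneous_X (ZMod 2) (0 : Fin 3)
  have y := isHomogeneous_X (ZMod 2) (1 : Fin 3)
  have z := isHomogeneous_X (ZMod 2) (2 : Fin 3)
  exact (x.pow 4).add (((x.add y).add z).mul ((x.mul y).mul z))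

theorem isHomogeneous_sq2Carlsson : sq2Carlsson.IsHomogeneous 6 := by
  have x := isHomogeneous_X (ZMod 2) (0 : Fin 3)
  have y := isHomogeneous_X (ZMod 2) (1 : Fin 3)
  have z := isHomogeneous_X (ZMod 2) (2 : Fin 3)
  exact ((x.mul y).mul z).mul ((((x.pow 3).add (y.pow 3)).add (z.pow 3)).add ((x.mul y).mul z))

theorem isHomogeneous_sq3Carlsson : sq3Carlsson.IsHomogeneous 7 := by
  have x := isHomogeneous_X (ZMod 2) (0 : Fin 3)
  have y := isHomogeneous_X (ZMod 2) (1 : Fin 3)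
  have z := isHomogeneous_X (ZMod 2) (2 : Fin 3)
  exact (((((((x.pow 4).mul (y.pow 2)).mul z).add (((x.pow 4).mul y).mul (z.pow 2))).add
    (((x.pow 2).mul (y.pow 4)).mul z)).add ((x.mul (y.pow 4)).mul (z.pow 2))).add
    (((x.pow 2).mul y).mul (z.pow 4))).add ((x.mul (y.pow 2)).mul (z.pow 4))

theorem homogeneousComponent_totalSq_fCarlsson (n : ℕ) :
    homogeneousComponent n (totalSq fCarlsson) =
      (if n = 4 then fCarlsson else 0) + (if n = 6 then sq2Carlsson else 0) +
        (if n = 7 then sq3Carlsson else 0) + (if n = 8 then fCarlsson ^ 2 else 0) := by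
  rw [totalSq_fCarlsson, map_add, map_add, map_add,
    homogeneousComponent_of_mem isHomogeneous_fCarlsson,
    homogeneousComponent_of_mem isHomogeneous_sq2Carlsson,
    homogeneousComponent_of_mem isHomogeneous_sq3Carlsson,
    homogeneousComponent_of_mem (isHomogeneous_fCarlsson.pow 2)]

abbrev GF8 : Type := AdjoinRoot (Polynomial.X ^ 3 + Polynomial.X ^ 2 + 1 : Polynomial (ZMod 2))

namespace GF8

instance : Nontrivial GF8 :=
  AdjoinRoot.nontrivial _ <| by
    rw [show (Polynomial.X ^ 3 + Polynomial.X ^ 2 + 1 : Polynomial (ZMod 2)).degree = 3 by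
      compute_degree!]
    decide

instance : CharP GF8 2 :=
  charP_of_injective_algebraMap (algebraMap (ZMod 2) GF8).injective 2

def gen : GF8 := AdjoinRoot.root _

theorem gen_pow_three_add_sq_add_one : gen ^ 3 + gen ^ 2 + 1 = 0 := by
  have h := AdjoinRoot.eval₂_root (Polynomial.X ^ 3 + Polynomial.X ^ 2 + 1 : Polynomial (ZMod 2))
  simp only [Polynomial.eval₂_add, Polynomial.eval₂_X_pow, Polynomial.eval₂_one] at h
  exact h

def carlssonPoint : Fin 3 → GF8 := ![1, gen, gen ^ 2]

theorem aeval_carlssonPoint_fCarlsson : aeval carlssonPoint fCarlsson = 0 := by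
  simp only [carlssonPoint, fCarlsson, map_add, map_pow, map_mul, aeval_X, Matrix.cons_val_zero,
    Matrix.cons_val_one, Matrix.cons_val]
  grind [gen_pow_three_add_sq_add_one]

theorem aeval_carlssonPoint_sq3Carlsson : aeval carlssonPoint sq3Carlsson = 1 := by
  simp only [carlssonPoint, sq3Carlsson, map_add, map_pow, map_mul, aeval_X, Matrix.cons_val_zero,
    Matrix.cons_val_one, Matrix.cons_val]
  grind [gen_pow_three_add_sq_add_one]

end GF8

/-- In `H^*(B(Z/2)³; F₂) = F₂[x,y,z]`, the degree-4 element
`f = x⁴ + (x+y+z)xyz` satisfies `Sq¹(f) = 0` (the degree-5 component of the total square),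
but `Sq³(f)` (the degree-7 component of the total square) is not divisible by `f`. -/
theorem carlsson_class_sq_one_zero_sq_three_not_divisible :
    homogeneousComponent 5 (totalSq fCarlsson) = 0 ∧
    ¬ fCarlsson ∣ homogeneousComponent 7 (totalSq fCarlsson) := by
  have sq_one : homogeneousComponent 5 (totalSq fCarlsson) = 0 := by
    simp [homogeneousComponent_totalSq_fCarlsson]
  have sq_three : homogeneousComponent 7 (totalSq fCarlsson) = sq3Carlsson := by
    simp [homogeneousComponent_totalSq_fCarlsson]
  refine ⟨sq_one, sq_three ▸ not_dvd_of_aeval_eq_zero GF8.carlssonPoint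
    GF8.aeval_carlssonPoint_fCarlsson ?_⟩
  rw [GF8.aeval_carlssonPoint_sq3Carlsson]
  exact one_ne_zero

end
end

section
/- Let G be a finite group, q a prime power with q = p^r, and fix an embedding of Z_q into C. For an element u ∈ G of p-power order and an irreducible complex representation L of the centralizer Z_G(u), define χ_{(u,L)}(E) = (1/dim L) Σ_{g ∈ Z_G(u)} trace(u | E_g) · trace(g | L) for E a conjugation-equivariant virtual complex vector bundle on G. Then χ_{(u,L)} is a ring homomorphism from the ring of conjugation-equivariant virtual vector bundles on G (with pointwise tensor product) to C. -/
noncomputable section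

open CategoryTheory

/-- A conjugation-equivariant complex vector bundle on a finite group `G`: a representation
`ρ` of `G` on a finite-dimensional space `V` (the total space of sections) together with an
equivariant decomposition of `V` into fibers, recorded by a complete orthogonal family of
idempotents `π g` (projection onto the fiber at `g`) satisfying
`ρ h ∘ π g = π (hgh⁻¹) ∘ ρ h`.  The fiber at `g` is a representation of the centralizer
`Z_G(g)`. -/
structure ConjBundle (G : Type) [Group G] [Fintype G] where
  V : Type
  [ac : AddCommGroup V]
  [mod : Module ℂ V]
  [fd : FiniteDimensional ℂ V]
  ρ : Representation ℂ G V
  π : G → (V →ₗ[ℂ] V)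
  idem : ∀ g, π g ∘ₗ π g = π g
  orth : ∀ g h, g ≠ h → π g ∘ₗ π h = 0
  total : ∑ g : G, π g = LinearMap.id
  equivar : ∀ h g, ρ h ∘ₗ π g = π (h * g * h⁻¹) ∘ₗ ρ h

attribute [instance] ConjBundle.ac ConjBundle.mod ConjBundle.fd

/-- The character `χ_{(u,L)}` of the pair of an element `u ∈ G` and a representation `L` of
its centralizer, evaluated on a conjugation-equivariant vector bundle `B`:
`χ_{(u,L)}(B) = (1/dim L) Σ_{g ∈ Z_G(u)} trace(u | B_g) · trace(g | L)`,
where `trace(u | B_g) = trace(ρ_B(u) ∘ π_B(g))`. -/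
def chiUL {G : Type} [Group G] [Fintype G] (u : G)
    (L : FDRep ℂ ↥(Subgroup.centralizer ({u} : Set G))) (B : ConjBundle G) : ℂ :=
  (Module.finrank ℂ L : ℂ)⁻¹ *
    ∑ᶠ g : ↥(Subgroup.centralizer ({u} : Set G)),
      LinearMap.trace ℂ B.V (B.ρ u ∘ₗ B.π (g : G)) * FDRep.character L g

/-!
Write `t_B(g) = trace(u | B_g)`. It vanishes off `Z_G(u)`, is invariant under conjugation by
`Z_G(u)`, and is additive in direct sums and convolutive in tensor products:
`t_{B ⊗ C}(g) = Σ_{ab = g} t_B(a) t_C(b)`. Hence `χ(B ⊗ C)` equals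
`(dim L)⁻¹ Σ_{a,b ∈ Z_G(u)} t_B(a) t_C(b) χ_L(ab)`. Since `t_C` is a class function on `Z_G(u)`,
the operator `Σ_b t_C(b) L(b)` commutes with `L`, so by Schur's lemma it is the scalar `χ(C)`, and
the inner sum over `b` collapses to `χ(C) χ_L(a)`.
-/

theorem LinearMap.trace_eq_of_comp_eq {R M N : Type*} [CommRing R] [AddCommGroup M] [Module R M]
    [AddCommGroup N] [Module R N] (e : M ≃ₗ[R] N) {f : M →ₗ[R] M} {f' : N →ₗ[R] N}
    (h : (e : M →ₗ[R] N) ∘ₗ f = f' ∘ₗ e) : trace R M f = trace R N f' := by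
  have hconj : e.conj f = f' := by
    ext x
    simpa using congr($h (e.symm x))
  rw [← hconj, LinearMap.trace_conj']

namespace FDRep

variable {k H : Type} [Field k] [Group H] (L : FDRep k H)

theorem finrank_pos_of_simple [Simple L] : 0 < Module.finrank k L := by
  refine Module.finrank_pos_iff.mpr (not_subsingleton_iff_nontrivial.mp fun _ => id_nonzero L ?_)
  exact Action.hom_ext _ _ (FGModuleCat.hom_ext (LinearMap.ext fun _ => Subsingleton.elim _ _))

variable [Fintype H]

theorem sum_mul_character_mul (f : H → k) (a : H) :
    ∑ b, f b * L.character (a * b) = LinearMap.trace k L (L.ρ a * ∑ b, f b • L.ρ b) := by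
  simp only [Finset.mul_sum, mul_smul_comm, map_sum, map_smul, smul_eq_mul, ← map_mul]
  rfl

/-- Schur's lemma: a class function `f` makes `∑ f(b) ρ(b)` central, hence scalar on simple `L`. -/
theorem exists_sum_smul_ρ_eq_smul_id [IsAlgClosed k] [Simple L] {f : H → k}
    (hf : ∀ h b, f (h * b * h⁻¹) = f b) : ∃ c : k, ∑ b, f b • L.ρ b = c • LinearMap.id := by
  have hcomm : ∀ h : H, (∑ b, f b • L.ρ b) * L.ρ h = L.ρ h * ∑ b, f b • L.ρ b := by
    intro h
    rw [Finset.mul_sum, Finset.sum_mul]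
    refine (Fintype.sum_equiv (MulAut.conj h).toEquiv _ _ fun b => ?_).symm
    simp only [MulEquiv.toEquiv_eq_coe, EquivLike.coe_coe, MulAut.conj_apply, hf, smul_mul_assoc,
      mul_smul_comm, ← map_mul, inv_mul_cancel_right]
  let φ : L ⟶ L := ⟨FGModuleCat.ofHom (∑ b, f b • L.ρ b), fun h => FGModuleCat.hom_ext (hcomm h)⟩
  obtain ⟨c, hc⟩ := endomorphism_simple_eq_smul_id k φ
  exact ⟨c, (congrArg (fun ψ : L ⟶ L => ψ.hom.hom.hom) hc).symm⟩

theorem finrank_mul_sum_mul_character_mul [IsAlgClosed k] [Simple L] {f : H → k}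
    (hf : ∀ h b, f (h * b * h⁻¹) = f b) (a : H) :
    Module.finrank k L * ∑ b, f b * L.character (a * b) =
      (∑ b, f b * L.character b) * L.character a := by
  obtain ⟨c, hc⟩ := L.exists_sum_smul_ρ_eq_smul_id hf
  have hsum := L.sum_mul_character_mul f 1
  simp only [one_mul, map_one] at hsum
  rw [hsum, sum_mul_character_mul, hc, ← Module.End.one_eq_id, mul_smul_comm, mul_one, map_smul,
    map_smul, LinearMap.trace_one]
  simp only [smul_eq_mul, character]
  ring

end FDRep

theorem Subgroup.sum_convolution_mul {R G : Type*} [CommSemiring R] [Group G] [Fintype G]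
    [DecidableEq G] (H : Subgroup G) [Fintype H] (α β : G → R) (χ : H → R)
    (hα : ∀ a ∉ H, α a = 0) (hβ : ∀ b ∉ H, β b = 0) :
    ∑ g : H, (∑ x : G × G, if x.1 * x.2 = g then α x.1 * β x.2 else 0) * χ g =
      ∑ a : H, ∑ b : H, α a * β b * χ (a * b) := by
  have restrict (g : H) : ∑ x : G × G, (if x.1 * x.2 = g then α x.1 * β x.2 else 0) =
      ∑ x : H × H, if x.1 * x.2 = g then α x.1 * β x.2 else 0 := by
    refine (Fintype.sum_of_injective (Prod.map Subtype.val Subtype.val)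
      (Prod.map_injective.mpr ⟨Subtype.val_injective, Subtype.val_injective⟩) _ _ ?_ ?_).symm
    · rintro ⟨a, b⟩ hab
      by_cases ha : a ∈ H
      · by_cases hb : b ∈ H
        · exact absurd ⟨(⟨a, ha⟩, ⟨b, hb⟩), rfl⟩ hab
        · simp [hβ b hb]
      · simp [hα a ha]
    · intro x
      simp [Subtype.ext_iff]
  simp only [restrict, Finset.sum_mul, ite_mul, zero_mul]
  rw [Finset.sum_comm, Fintype.sum_prod_type]
  simp

namespace ConjBundle

variable {G : Type} [Group G] [Fintype G]

def fiberTrace (B : ConjBundle G) (u g : G) : ℂ :=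
  LinearMap.trace ℂ B.V (B.ρ u ∘ₗ B.π g)

/-- `u` maps the fiber at `g` to the fiber at `u g u⁻¹`, so off the centralizer it has no
diagonal part. -/
theorem fiberTrace_eq_zero_of_notMem_centralizer (B : ConjBundle G) {u g : G}
    (hg : g ∉ Subgroup.centralizer ({u} : Set G)) : B.fiberTrace u g = 0 := by
  have hne : g ≠ u * g * u⁻¹ := by
    rwa [ne_eq, eq_mul_inv_iff_mul_eq, ← Subgroup.mem_centralizer_singleton_iff]
  calc B.fiberTrace u g = LinearMap.trace ℂ B.V ((B.ρ u ∘ₗ B.π g) ∘ₗ B.π g) := by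
        rw [fiberTrace, LinearMap.comp_assoc, B.idem]
    _ = LinearMap.trace ℂ B.V (B.π g ∘ₗ B.π (u * g * u⁻¹) ∘ₗ B.ρ u) := by
        rw [LinearMap.trace_comp_comm', B.equivar]
    _ = 0 := by
        rw [← LinearMap.comp_assoc, B.orth g _ hne, LinearMap.zero_comp, map_zero]

theorem fiberTrace_conj (B : ConjBundle G) {u h : G} (hh : h ∈ Subgroup.centralizer ({u} : Set G))
    (g : G) : B.fiberTrace u (h * g * h⁻¹) = B.fiberTrace u g := by
  refine (LinearMap.trace_eq_of_comp_eq
    (LinearMap.GeneralLinearGroup.toLinearEquiv (B.ρ.asGroupHom h)) ?_).symm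
  change B.ρ h ∘ₗ (B.ρ u ∘ₗ B.π g) = (B.ρ u ∘ₗ B.π (h * g * h⁻¹)) ∘ₗ B.ρ h
  rw [← LinearMap.comp_assoc, ← Module.End.mul_eq_comp (B.ρ h), ← map_mul,
    Subgroup.mem_centralizer_singleton_iff.mp hh, map_mul, Module.End.mul_eq_comp,
    LinearMap.comp_assoc, B.equivar, LinearMap.comp_assoc]

theorem π_one_eq_id (D : ConjBundle G) (h0 : ∀ g ≠ 1, D.π g = 0) : D.π 1 = LinearMap.id := by
  rw [← D.total, Finset.sum_eq_single_of_mem 1 (Finset.mem_univ _) fun g _ => h0 g]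

theorem fiberTrace_of_unit [DecidableEq G] (D : ConjBundle G) (h0 : ∀ g ≠ 1, D.π g = 0)
    (hρ : ∀ h, D.ρ h = LinearMap.id) (hrk : Module.finrank ℂ D.V = 1) (u g : G) :
    D.fiberTrace u g = if g = 1 then 1 else 0 := by
  split_ifs with hg
  · rw [fiberTrace, hg, hρ, D.π_one_eq_id h0, LinearMap.id_comp, LinearMap.trace_id, hrk,
      Nat.cast_one]
  · rw [fiberTrace, h0 g hg, LinearMap.comp_zero, map_zero]

theorem fiberTrace_of_prod {B C D : ConjBundle G} (e : D.V ≃ₗ[ℂ] B.V × C.V)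
    (hρ : ∀ h : G, (e : D.V →ₗ[ℂ] B.V × C.V) ∘ₗ D.ρ h =
      ((B.ρ h).prodMap (C.ρ h)) ∘ₗ (e : D.V →ₗ[ℂ] B.V × C.V))
    (hπ : ∀ g : G, (e : D.V →ₗ[ℂ] B.V × C.V) ∘ₗ D.π g =
      ((B.π g).prodMap (C.π g)) ∘ₗ (e : D.V →ₗ[ℂ] B.V × C.V)) (u g : G) :
    D.fiberTrace u g = B.fiberTrace u g + C.fiberTrace u g := by
  rw [fiberTrace, LinearMap.trace_eq_of_comp_eq e (f' := (B.ρ u ∘ₗ B.π g).prodMap (C.ρ u ∘ₗ C.π g)),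
    LinearMap.trace_prodMap']
  · rfl
  · rw [← LinearMap.comp_assoc, hρ, LinearMap.comp_assoc, hπ, ← LinearMap.comp_assoc,
      LinearMap.prodMap_comp]

theorem fiberTrace_of_tensor {B C D : ConjBundle G} [DecidableEq G]
    (e : D.V ≃ₗ[ℂ] TensorProduct ℂ B.V C.V)
    (hρ : ∀ h : G, (e : D.V →ₗ[ℂ] TensorProduct ℂ B.V C.V) ∘ₗ D.ρ h =
      (TensorProduct.map (B.ρ h) (C.ρ h)) ∘ₗ (e : D.V →ₗ[ℂ] TensorProduct ℂ B.V C.V))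
    (hπ : ∀ g : G, (e : D.V →ₗ[ℂ] TensorProduct ℂ B.V C.V) ∘ₗ D.π g =
      (∑ x : G × G, if x.1 * x.2 = g then TensorProduct.map (B.π x.1) (C.π x.2) else 0) ∘ₗ
        (e : D.V →ₗ[ℂ] TensorProduct ℂ B.V C.V)) (u g : G) :
    D.fiberTrace u g =
      ∑ x : G × G, if x.1 * x.2 = g then B.fiberTrace u x.1 * C.fiberTrace u x.2 else 0 := by
  rw [fiberTrace, LinearMap.trace_eq_of_comp_eq e (f' := ∑ x : G × G,
    if x.1 * x.2 = g then TensorProduct.map (B.ρ u ∘ₗ B.π x.1) (C.ρ u ∘ₗ C.π x.2) else 0)]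
  · simp only [map_sum, apply_ite (LinearMap.trace ℂ _), map_zero, LinearMap.trace_tensorProduct']
    rfl
  · rw [← LinearMap.comp_assoc, hρ, LinearMap.comp_assoc, hπ, ← LinearMap.comp_assoc]
    congr 1
    simp only [← Module.End.mul_eq_comp, Finset.mul_sum, mul_ite, mul_zero, TensorProduct.map_mul]

end ConjBundle

section chiUL

variable {G : Type} [Group G] [Fintype G] (u : G) [Fintype (Subgroup.centralizer ({u} : Set G))]
  (L : FDRep ℂ (Subgroup.centralizer ({u} : Set G)))

theorem chiUL_eq_sum (B : ConjBundle G) :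
    chiUL u L B = (Module.finrank ℂ L : ℂ)⁻¹ *
      ∑ g : Subgroup.centralizer ({u} : Set G), B.fiberTrace u g * L.character g := by
  rw [chiUL, finsum_eq_sum_of_fintype]
  rfl

theorem chiUL_of_unit [DecidableEq G] [Simple L] (D : ConjBundle G) (h0 : ∀ g ≠ 1, D.π g = 0)
    (hρ : ∀ h, D.ρ h = LinearMap.id) (hrk : Module.finrank ℂ D.V = 1) : chiUL u L D = 1 := by
  have hd : (Module.finrank ℂ L : ℂ) ≠ 0 := Nat.cast_ne_zero.mpr L.finrank_pos_of_simple.ne'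
  simp only [chiUL_eq_sum, D.fiberTrace_of_unit h0 hρ hrk, OneMemClass.coe_eq_one, ite_mul,
    one_mul, zero_mul, Finset.sum_ite_eq', Finset.mem_univ, if_true, FDRep.char_one]
  exact inv_mul_cancel₀ hd

theorem chiUL_of_prod {B C D : ConjBundle G} (e : D.V ≃ₗ[ℂ] B.V × C.V)
    (hρ : ∀ h : G, (e : D.V →ₗ[ℂ] B.V × C.V) ∘ₗ D.ρ h =
      ((B.ρ h).prodMap (C.ρ h)) ∘ₗ (e : D.V →ₗ[ℂ] B.V × C.V))
    (hπ : ∀ g : G, (e : D.V →ₗ[ℂ] B.V × C.V) ∘ₗ D.π g =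
      ((B.π g).prodMap (C.π g)) ∘ₗ (e : D.V →ₗ[ℂ] B.V × C.V)) :
    chiUL u L D = chiUL u L B + chiUL u L C := by
  simp only [chiUL_eq_sum, ← mul_add, ← Finset.sum_add_distrib, ← add_mul,
    ConjBundle.fiberTrace_of_prod e hρ hπ]

theorem chiUL_of_tensor [DecidableEq G] [Simple L] {B C D : ConjBundle G}
    (e : D.V ≃ₗ[ℂ] TensorProduct ℂ B.V C.V)
    (hρ : ∀ h : G, (e : D.V →ₗ[ℂ] TensorProduct ℂ B.V C.V) ∘ₗ D.ρ h =
      (TensorProduct.map (B.ρ h) (C.ρ h)) ∘ₗ (e : D.V →ₗ[ℂ] TensorProduct ℂ B.V C.V))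
    (hπ : ∀ g : G, (e : D.V →ₗ[ℂ] TensorProduct ℂ B.V C.V) ∘ₗ D.π g =
      (∑ x : G × G, if x.1 * x.2 = g then TensorProduct.map (B.π x.1) (C.π x.2) else 0) ∘ₗ
        (e : D.V →ₗ[ℂ] TensorProduct ℂ B.V C.V)) :
    chiUL u L D = chiUL u L B * chiUL u L C := by
  have hd : (Module.finrank ℂ L : ℂ) ≠ 0 := Nat.cast_ne_zero.mpr L.finrank_pos_of_simple.ne'
  have schur (a : Subgroup.centralizer ({u} : Set G)) :
      ∑ b : Subgroup.centralizer ({u} : Set G), C.fiberTrace u b * L.character (a * b) =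
        chiUL u L C * L.character a := by
    rw [chiUL_eq_sum, mul_assoc, eq_inv_mul_iff_mul_eq₀ hd]
    exact L.finrank_mul_sum_mul_character_mul (f := fun b => C.fiberTrace u b)
      (fun h b => C.fiberTrace_conj h.2 b) a
  rw [chiUL_eq_sum, chiUL_eq_sum u L B]
  simp only [ConjBundle.fiberTrace_of_tensor e hρ hπ]
  rw [Subgroup.sum_convolution_mul _ _ _ _ (fun a => B.fiberTrace_eq_zero_of_notMem_centralizer)
    (fun b => C.fiberTrace_eq_zero_of_notMem_centralizer)]
  simp only [mul_assoc, ← Finset.mul_sum, schur, Finset.sum_mul]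
  exact congrArg _ (Finset.sum_congr rfl fun _ _ => by ring)

end chiUL

theorem chiUL_is_ring_hom_general
    (G : Type) [Group G] [Fintype G] [DecidableEq G]
    (u : G)
    (L : FDRep ℂ ↥(Subgroup.centralizer ({u} : Set G))) (hL : Simple L) :
    -- χ sends the unit bundle (the fiber ℂ with trivial action, supported at 1) to 1
    (∀ D : ConjBundle G, (∀ g : G, g ≠ 1 → D.π g = 0) →
      (∀ h : G, D.ρ h = LinearMap.id) → Module.finrank ℂ D.V = 1 →
      chiUL u L D = 1) ∧
    -- χ is additive on direct sums of bundles
    (∀ B C D : ConjBundle G, ∀ e : D.V ≃ₗ[ℂ] B.V × C.V,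
      (∀ h : G, (e : D.V →ₗ[ℂ] B.V × C.V) ∘ₗ D.ρ h =
        ((B.ρ h).prodMap (C.ρ h)) ∘ₗ (e : D.V →ₗ[ℂ] B.V × C.V)) →
      (∀ g : G, (e : D.V →ₗ[ℂ] B.V × C.V) ∘ₗ D.π g =
        ((B.π g).prodMap (C.π g)) ∘ₗ (e : D.V →ₗ[ℂ] B.V × C.V)) →
      chiUL u L D = chiUL u L B + chiUL u L C) ∧
    -- χ is multiplicative on products of bundles
    (∀ B C D : ConjBundle G, ∀ e : D.V ≃ₗ[ℂ] TensorProduct ℂ B.V C.V,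
      (∀ h : G, (e : D.V →ₗ[ℂ] TensorProduct ℂ B.V C.V) ∘ₗ D.ρ h =
        (TensorProduct.map (B.ρ h) (C.ρ h)) ∘ₗ (e : D.V →ₗ[ℂ] TensorProduct ℂ B.V C.V)) →
      (∀ g : G, (e : D.V →ₗ[ℂ] TensorProduct ℂ B.V C.V) ∘ₗ D.π g =
        (∑ x : G × G, if x.1 * x.2 = g then TensorProduct.map (B.π x.1) (C.π x.2) else 0) ∘ₗ
          (e : D.V →ₗ[ℂ] TensorProduct ℂ B.V C.V)) →
      chiUL u L D = chiUL u L B * chiUL u L C) := by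
  classical
  exact ⟨chiUL_of_unit u L, fun _ _ _ => chiUL_of_prod u L, fun _ _ _ => chiUL_of_tensor u L⟩

/-- For `u ∈ G` of `p`-power order and `L` an irreducible complex representation
of `Z_G(u)`, the functional `χ_{(u,L)}` is a ring homomorphism from the Grothendieck ring
`K_G(G)` of conjugation-equivariant virtual vector bundles on `G` to `ℂ`: it sends the unit
bundle to `1`, direct sums of bundles to sums, and products of bundles to products. -/
theorem chiUL_is_ring_hom
    (G : Type) [Group G] [Fintype G] [DecidableEq G]
    (p : ℕ) (hp : p.Prime)
    (u : G) (hu : ∃ k : ℕ, orderOf u = p ^ k)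
    (L : FDRep ℂ ↥(Subgroup.centralizer ({u} : Set G))) (hL : Simple L) :
    -- χ sends the unit bundle (the fiber ℂ with trivial action, supported at 1) to 1
    (∀ D : ConjBundle G, (∀ g : G, g ≠ 1 → D.π g = 0) →
      (∀ h : G, D.ρ h = LinearMap.id) → Module.finrank ℂ D.V = 1 →
      chiUL u L D = 1) ∧
    -- χ is additive on direct sums of bundles
    (∀ B C D : ConjBundle G, ∀ e : D.V ≃ₗ[ℂ] B.V × C.V,
      (∀ h : G, (e : D.V →ₗ[ℂ] B.V × C.V) ∘ₗ D.ρ h =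
        ((B.ρ h).prodMap (C.ρ h)) ∘ₗ (e : D.V →ₗ[ℂ] B.V × C.V)) →
      (∀ g : G, (e : D.V →ₗ[ℂ] B.V × C.V) ∘ₗ D.π g =
        ((B.π g).prodMap (C.π g)) ∘ₗ (e : D.V →ₗ[ℂ] B.V × C.V)) →
      chiUL u L D = chiUL u L B + chiUL u L C) ∧
    -- χ is multiplicative on products of bundles
    (∀ B C D : ConjBundle G, ∀ e : D.V ≃ₗ[ℂ] TensorProduct ℂ B.V C.V,
      (∀ h : G, (e : D.V →ₗ[ℂ] TensorProduct ℂ B.V C.V) ∘ₗ D.ρ h =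
        (TensorProduct.map (B.ρ h) (C.ρ h)) ∘ₗ (e : D.V →ₗ[ℂ] TensorProduct ℂ B.V C.V)) →
      (∀ g : G, (e : D.V →ₗ[ℂ] TensorProduct ℂ B.V C.V) ∘ₗ D.π g =
        (∑ x : G × G, if x.1 * x.2 = g then TensorProduct.map (B.π x.1) (C.π x.2) else 0) ∘ₗ
          (e : D.V →ₗ[ℂ] TensorProduct ℂ B.V C.V)) →
      chiUL u L D = chiUL u L B * chiUL u L C) :=
  chiUL_is_ring_hom_general G u L hL

end
end

section
/- Let G be a finite group, let c ∈ G with C the G-conjugacy class of c, let H ≤ G be such that c lies in some conjugate of H, and let δ: (G/H)^c → {H-conjugacy classes in H ∩ C} be defined as follows: for gH ∈ (G/H)^c (i.e., g^{-1}cg ∈ H), set δ(gH) = the H-conjugacy class of g^{-1}cg. Then δ is well-defined, and for each H-conjugacy class D ⊆ H ∩ C, the centralizer Z_G(c) acts transitively on the fiber δ^{-1}(D), with stabilizer at gH equal to g Z_H(g^{-1}cg) g^{-1} ∩ Z_G(c) ≅ Z_H(g^{-1}cg). -/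
/-- For a finite group `G`, a subgroup `H` and an element `c ∈ G` with conjugacy
class `C`: the map `δ` sending a fixed point `gH ∈ (G/H)^c` (i.e. `g⁻¹cg ∈ H`) to the
`H`-conjugacy class of `g⁻¹cg` in `H ∩ C` is well defined; a coset `gH` is `c`-fixed iff
`g⁻¹cg ∈ H`; the centralizer `Z_G(c)` acts transitively on each fiber `δ⁻¹(D)`; and the
stabilizer of `gH` in `Z_G(c)` is `g Z_H(g⁻¹cg) g⁻¹ ≅ Z_H(g⁻¹cg)`. -/
theorem fixed_points_fibration_over_conjugacy_classes
    (G : Type) [Group G] [Finite G] (H : Subgroup G) (c : G) :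
    -- δ is well-defined: the H-conjugacy class of g⁻¹cg depends only on the coset gH,
    -- and lands in H ∩ C
    (∀ g g' : G, (QuotientGroup.mk g : G ⧸ H) = QuotientGroup.mk g' →
      g⁻¹ * c * g ∈ H →
        (g'⁻¹ * c * g' ∈ H ∧ IsConj c (g'⁻¹ * c * g') ∧
          ∃ h ∈ H, h⁻¹ * (g⁻¹ * c * g) * h = g'⁻¹ * c * g')) ∧
    -- the fixed points of c on G/H are exactly the cosets gH with g⁻¹cg ∈ H
    (∀ g : G, c • (QuotientGroup.mk g : G ⧸ H) = QuotientGroup.mk g ↔ g⁻¹ * c * g ∈ H) ∧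
    -- Z_G(c) acts transitively on each fiber of δ
    (∀ g g' : G, g⁻¹ * c * g ∈ H → g'⁻¹ * c * g' ∈ H →
      (∃ h ∈ H, h⁻¹ * (g⁻¹ * c * g) * h = g'⁻¹ * c * g') →
        ∃ z ∈ Subgroup.centralizer ({c} : Set G),
          (QuotientGroup.mk (z * g) : G ⧸ H) = QuotientGroup.mk g') ∧
    -- the stabilizer of gH in Z_G(c) is g·Z_H(g⁻¹cg)·g⁻¹ (a copy of Z_H(g⁻¹cg))
    (∀ g : G, g⁻¹ * c * g ∈ H →
      ∀ z ∈ Subgroup.centralizer ({c} : Set G),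
        ((QuotientGroup.mk (z * g) : G ⧸ H) = QuotientGroup.mk g ↔
          ∃ h ∈ H, (h * (g⁻¹ * c * g) = (g⁻¹ * c * g) * h) ∧ z = g * h * g⁻¹)) := by
  refine ⟨?_, ?_, ?_, ?_⟩
  · intro g g' hq hg
    rw [QuotientGroup.eq] at hq
    have key : g'⁻¹ * c * g' = (g⁻¹ * g')⁻¹ * (g⁻¹ * c * g) * (g⁻¹ * g') := by group
    refine ⟨?_, ?_, ⟨g⁻¹ * g', hq, key.symm⟩⟩
    · rw [key]; exact H.mul_mem (H.mul_mem (H.inv_mem hq) hg) hq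
    · exact isConj_iff.mpr ⟨g'⁻¹, by group⟩
  · intro g
    have : c • (QuotientGroup.mk g : G ⧸ H) = QuotientGroup.mk (c * g) := rfl
    rw [this, QuotientGroup.eq]
    constructor
    · intro hx
      have : (g⁻¹ * c * g)⁻¹ ∈ H := by
        have : (c * g)⁻¹ * g = (g⁻¹ * c * g)⁻¹ := by group
        rwa [this] at hx
      simpa using H.inv_mem this
    · intro hx
      have : (c * g)⁻¹ * g = (g⁻¹ * c * g)⁻¹ := by group
      rw [this]; exact H.inv_mem hx
  · rintro g g' hg hg' ⟨h, hh, heq⟩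
    refine ⟨g' * h⁻¹ * g⁻¹, ?_, ?_⟩
    · rw [Subgroup.mem_centralizer_iff]
      rintro m rfl
      have : m * (g' * h⁻¹ * g⁻¹) * (g' * h⁻¹ * g⁻¹)⁻¹ = m := by group
      have e2 : (g' * h⁻¹ * g⁻¹) * m * (g' * h⁻¹ * g⁻¹)⁻¹
          = g' * (h⁻¹ * (g⁻¹ * m * g) * h) * g'⁻¹ := by group
      have e3 : (g' * h⁻¹ * g⁻¹) * m * (g' * h⁻¹ * g⁻¹)⁻¹ = m := by
        rw [e2, heq]; group
      calc m * (g' * h⁻¹ * g⁻¹) = ((g' * h⁻¹ * g⁻¹) * m * (g' * h⁻¹ * g⁻¹)⁻¹)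
            * (g' * h⁻¹ * g⁻¹) := by rw [e3]
        _ = (g' * h⁻¹ * g⁻¹) * m := by group
    · rw [QuotientGroup.eq]
      have : (g' * h⁻¹ * g⁻¹ * g)⁻¹ * g' = h := by group
      rw [this]; exact hh
  · intro g hg z hz
    rw [QuotientGroup.eq]
    have hzc : c * z = z * c := Subgroup.mem_centralizer_iff.mp hz c rfl
    constructor
    · intro hm
      refine ⟨g⁻¹ * z * g, ?_, ?_, by group⟩
      · have : ((z * g)⁻¹ * g)⁻¹ = g⁻¹ * z * g := by group
        rw [← this]; exact H.inv_mem hm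
      · have : g⁻¹ * z * g * (g⁻¹ * c * g) = g⁻¹ * (z * c) * g := by group
        rw [this, ← hzc]; group
    · rintro ⟨h, hh, _, rfl⟩
      have : (g * h * g⁻¹ * g)⁻¹ * g = h⁻¹ := by group
      rw [this]; exact H.inv_mem hh
end
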